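/- For all a, b > 0 with a ≠ b, the value [log Q(a,b) - log M(a,b)] / [log Q(a,b) - log H(a,b)] lies strictly between 0 and 2/9. -/

import Mathlib

noncomputable def M (a b : ℝ) : ℝ := (a - b) / (2 * Real.arsinh ((a - b) / (a + b)))
noncomputable def H (a b : ℝ) : ℝ := 2 * a * b / (a + b)
noncomputable def Q (a b : ℝ) : ℝ := Real.sqrt ((a ^ 2 + b ^ 2) / 2)

/-!
Write (a - b) / (a + b) = sinh u. Then Q, M and H are (a + b) / 2 times cosh u, sinh u / u
and 2 - cosh² u, so the ratio depends only on u, and it is even in u. The lower bound comes from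
2 - cosh² u < 1 < cosh u and sinh u / u < cosh u. For the upper bound, concavity of log reduces
cosh^(7/9) u · (2 - cosh² u)^(2/9) < sinh u / u to the arithmetic-mean version
u (7 cosh u + 3 - cosh 2u) < 9 sinh u, which follows by differentiating three times: the
difference and its first two derivatives vanish at 0 and the third derivative is positive.
-/

open Real

lemma pos_of_hasDerivAt_of_zero {f f' : ℝ → ℝ} (hf : ∀ x, HasDerivAt f (f' x) x)
    (h0 : f 0 = 0) (hf' : ∀ x, 0 < x → 0 < f' x) : ∀ x, 0 < x → 0 < f x := by
  have hmono : StrictMonoOn f (Set.Ici 0) :=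
    strictMonoOn_of_deriv_pos (convex_Ici 0) (HasDerivAt.continuousOn fun y _ => hf y)
      fun y hy => by rw [(hf y).deriv]; exact hf' y (by simpa using hy)
  intro x hx
  simpa [h0] using hmono Set.self_mem_Ici hx.le hx

lemma sinh_lt_mul_cosh {u : ℝ} (hu : 0 < u) : sinh u < u * cosh u := by
  have hd (x : ℝ) : HasDerivAt (fun x => x * cosh x - sinh x) (x * sinh x) x :=
    (((hasDerivAt_id' x).mul (hasDerivAt_cosh x)).sub (hasDerivAt_sinh x)).congr_deriv (by ring)
  exact sub_pos.1 <|
    pos_of_hasDerivAt_of_zero hd (by simp) (fun x hx => mul_pos hx (sinh_pos_iff.2 hx)) u hu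

lemma mul_seven_cosh_add_three_sub_cosh_two_mul_lt {u : ℝ} (hu : 0 < u) :
    u * (7 * cosh u + 3 - cosh (2 * u)) < 9 * sinh u := by
  have hid (x : ℝ) : HasDerivAt (fun x => x) 1 x := hasDerivAt_id' x
  have hs2 (x : ℝ) : HasDerivAt (fun x => sinh (2 * x)) (2 * cosh (2 * x)) x :=
    ((hasDerivAt_sinh (2 * x)).comp x ((hid x).const_mul 2)).congr_deriv (by ring)
  have hc2 (x : ℝ) : HasDerivAt (fun x => cosh (2 * x)) (2 * sinh (2 * x)) x :=
    ((hasDerivAt_cosh (2 * x)).comp x ((hid x).const_mul 2)).congr_deriv (by ring)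
  have hd2 (x : ℝ) : HasDerivAt
      (fun x => 4 * sinh (2 * x) + 4 * x * cosh (2 * x) - 5 * sinh x - 7 * x * cosh x)
      (12 * cosh (2 * x) + 8 * x * sinh (2 * x) - 12 * cosh x - 7 * x * sinh x) x := by
    refine ((((hs2 x).const_mul 4).add (((hid x).const_mul 4).mul (hc2 x))).sub
      ((hasDerivAt_sinh x).const_mul 5)).sub (((hid x).const_mul 7).mul (hasDerivAt_cosh x))
      |>.congr_deriv ?_
    ring
  have hd1 (x : ℝ) : HasDerivAt
      (fun x => 2 * cosh x + cosh (2 * x) + 2 * x * sinh (2 * x) - 7 * x * sinh x - 3)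
      (4 * sinh (2 * x) + 4 * x * cosh (2 * x) - 5 * sinh x - 7 * x * cosh x) x := by
    refine (((((hasDerivAt_cosh x).const_mul 2).add (hc2 x)).add
      (((hid x).const_mul 2).mul (hs2 x))).sub (((hid x).const_mul 7).mul
      (hasDerivAt_sinh x))).sub_const 3 |>.congr_deriv ?_
    ring
  have hd0 (x : ℝ) : HasDerivAt (fun x => 9 * sinh x - x * (7 * cosh x + 3 - cosh (2 * x)))
      (2 * cosh x + cosh (2 * x) + 2 * x * sinh (2 * x) - 7 * x * sinh x - 3) x := by
    refine ((hasDerivAt_sinh x).const_mul 9).sub ((hid x).mul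
      ((((hasDerivAt_cosh x).const_mul 7).add_const 3).sub (hc2 x))) |>.congr_deriv ?_
    simp only [Pi.sub_apply]
    ring
  have h3 (x : ℝ) (hx : 0 < x) :
      0 < 12 * cosh (2 * x) + 8 * x * sinh (2 * x) - 12 * cosh x - 7 * x * sinh x := by
    have hc : cosh x < cosh (2 * x) := cosh_lt_cosh.2 (by
      rw [abs_of_pos hx, abs_of_pos (by linarith)]; linarith)
    have hs : sinh x < sinh (2 * x) := sinh_lt_sinh.2 (by linarith)
    have hs0 := sinh_pos_iff.2 hx
    nlinarith
  have h2 := pos_of_hasDerivAt_of_zero hd2 (by simp) h3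
  have h1 := pos_of_hasDerivAt_of_zero hd1 (by norm_num) h2
  have h0 := pos_of_hasDerivAt_of_zero hd0 (by simp) h1 u hu
  exact sub_pos.1 h0

theorem log_cosh_sub_log_sinh_div_self_div_bounds {u : ℝ} (hu : u ≠ 0) (hc : cosh u ^ 2 < 2) :
    0 < (log (cosh u) - log (sinh u / u)) / (log (cosh u) - log (2 - cosh u ^ 2)) ∧
    (log (cosh u) - log (sinh u / u)) / (log (cosh u) - log (2 - cosh u ^ 2)) < 2 / 9 := by
  wlog hpos : 0 < u generalizing u
  · have hneg : 0 < -u := neg_pos.2 (lt_of_le_of_ne (not_lt.1 hpos) hu)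
    simpa [neg_div_neg_eq] using this (neg_ne_zero.2 hu) (by rwa [cosh_neg]) hneg
  set c := cosh u
  have hc1 : 1 < c := one_lt_cosh.2 hu
  have hh : 0 < 2 - c ^ 2 := by linarith
  have hs : 0 < sinh u / u := div_pos (sinh_pos_iff.2 hpos) hpos
  have hsc : sinh u / u < c := (div_lt_iff₀ hpos).2 (by linarith [sinh_lt_mul_cosh hpos])
  have hnum : 0 < log c - log (sinh u / u) := sub_pos.2 (log_lt_log hs hsc)
  have hden : 0 < log c - log (2 - c ^ 2) := sub_pos.2 (log_lt_log hh (by nlinarith))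
  have hconcave :
      7 / 9 * log c + 2 / 9 * log (2 - c ^ 2) ≤ log (7 / 9 * c + 2 / 9 * (2 - c ^ 2)) :=
    strictConcaveOn_log_Ioi.concaveOn.2 (Set.mem_Ioi.2 (by linarith)) (Set.mem_Ioi.2 hh)
      (by norm_num) (by norm_num) (by norm_num)
  have hmean : 7 / 9 * c + 2 / 9 * (2 - c ^ 2) < sinh u / u := by
    have h := mul_seven_cosh_add_three_sub_cosh_two_mul_lt hpos
    rw [cosh_two_mul, ← sub_eq_of_eq_add (cosh_sq u)] at h
    rw [lt_div_iff₀ hpos]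
    linarith
  have hlog := log_lt_log (by positivity) hmean
  exact ⟨div_pos hnum hden, (div_lt_iff₀ hden).2 (by linarith)⟩

lemma log_mul_sub_log_mul {A x y : ℝ} (hA : A ≠ 0) (hx : x ≠ 0) (hy : y ≠ 0) :
    log (A * x) - log (A * y) = log x - log y := by
  rw [log_mul hA hx, log_mul hA hy, add_sub_add_left_eq_sub]

section Parametrization

variable {a b u : ℝ} (hu : sinh u = (a - b) / (a + b))
include hu

lemma Q_eq_of_sinh_eq (hab : 0 < a + b) : Q a b = (a + b) / 2 * cosh u := by
  have hsq : ((a + b) / 2 * cosh u) ^ 2 = (a ^ 2 + b ^ 2) / 2 := by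
    rw [mul_pow, cosh_sq, hu]
    field_simp
    ring
  rw [Q, ← hsq, sqrt_sq (by positivity)]

lemma H_eq_of_sinh_eq (hab : a + b ≠ 0) : H a b = (a + b) / 2 * (2 - cosh u ^ 2) := by
  rw [H, cosh_sq, hu]
  field_simp
  ring

lemma M_eq_of_sinh_eq (hab : a + b ≠ 0) : M a b = (a + b) / 2 * (sinh u / u) := by
  rw [M, ← hu, arsinh_sinh, hu, mul_div_assoc',
    show (a + b) / 2 * ((a - b) / (a + b)) = (a - b) / 2 by field_simp, div_div, mul_comm]

end Parametrization

theorem stmt19 (a b : ℝ) (ha : 0 < a) (hb : 0 < b) (hab : a ≠ b) :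
    0 < (Real.log (Q a b) - Real.log (M a b)) / (Real.log (Q a b) - Real.log (H a b)) ∧
    (Real.log (Q a b) - Real.log (M a b)) / (Real.log (Q a b) - Real.log (H a b)) < 2 / 9 := by
  have hs : 0 < a + b := add_pos ha hb
  set u := arsinh ((a - b) / (a + b))
  have hu : sinh u = (a - b) / (a + b) := sinh_arsinh _
  have hu0 : u ≠ 0 := by
    simpa [u, arsinh_eq_zero_iff, sub_eq_zero, hs.ne'] using hab
  have hc : cosh u ^ 2 < 2 := by
    rw [cosh_sq, hu, div_pow, ← lt_sub_iff_add_lt, div_lt_iff₀ (by positivity)]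
    nlinarith [mul_pos ha hb]
  rw [Q_eq_of_sinh_eq hu hs, M_eq_of_sinh_eq hu hs.ne', H_eq_of_sinh_eq hu hs.ne',
    log_mul_sub_log_mul (by positivity) (cosh_pos u).ne' (div_ne_zero (sinh_ne_zero.2 hu0) hu0),
    log_mul_sub_log_mul (by positivity) (cosh_pos u).ne' (sub_pos.2 hc).ne']
  exact log_cosh_sub_log_sinh_div_self_div_bounds hu0 hc
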